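/- Let A be a finite set of positive real numbers with |A| ≥ 2. Then |A+A|^2 · |A/A| ≥ |A|^4 / (4⌈log₂ |A|⌉). -/

import Mathlib

open Finset Pointwise

/-!
Solymosi's argument. For `l ∈ A / A` let `r(l)` count the points `(a, b) ∈ A × A` on the line
`a = l b`; then `∑ r(l) = |A|²`, so Cauchy–Schwarz gives `|A|⁴ ≤ |A/A| ∑ r(l)²`. For slopes
`l < m`, adding a point on the `l`-line to one on the `m`-line gives `r(l) r(m)` distinct points
of `(A+A) × (A+A)`, all strictly between the two lines. For consecutive slopes `l < l⁺` of any
set of ratios these cones are disjoint, so `∑ r(l) r(l⁺) ≤ |A+A|²`. On a set of ratios whose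
values of `r` agree up to a factor `2` this bounds `∑ r(l)²` by `3|A+A|²`, and as
`1 ≤ r ≤ |A| ≤ 2^K` with `K = ⌈log₂ |A|⌉`, the ratios split into `K` such dyadic classes.
-/

section Field

variable {𝕜 : Type*} [Field 𝕜] [DecidableEq 𝕜] {A : Finset 𝕜} {l m : 𝕜} {p : 𝕜 × 𝕜}

def ratioFiber (A : Finset 𝕜) (l : 𝕜) : Finset (𝕜 × 𝕜) :=
  {p ∈ A ×ˢ A | p.1 / p.2 = l}

lemma mem_ratioFiber : p ∈ ratioFiber A l ↔ p.1 ∈ A ∧ p.2 ∈ A ∧ p.1 / p.2 = l := by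
  simp [ratioFiber, and_assoc]

lemma sum_card_ratioFiber (A : Finset 𝕜) : ∑ l ∈ A / A, #(ratioFiber A l) = #A ^ 2 := by
  rw [sq, ← card_product]
  exact (card_eq_sum_card_fiberwise fun p hp ↦ div_mem_div (mem_product.1 hp).1
    (mem_product.1 hp).2).symm

lemma card_ratioFiber_pos (hl : l ∈ A / A) : 0 < #(ratioFiber A l) := by
  obtain ⟨a, ha, b, hb, rfl⟩ := mem_div.1 hl
  exact card_pos.2 ⟨(a, b), mem_ratioFiber.2 ⟨ha, hb, rfl⟩⟩

lemma fst_eq_mul_snd_of_mem_ratioFiber (hA : 0 ∉ A) (hp : p ∈ ratioFiber A l) :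
    p.1 = l * p.2 := by
  obtain ⟨-, hp2, rfl⟩ := mem_ratioFiber.1 hp
  exact (div_mul_cancel₀ _ (ne_of_mem_of_not_mem hp2 hA)).symm

lemma card_ratioFiber_le (hA : 0 ∉ A) : #(ratioFiber A l) ≤ #A := by
  refine card_le_card_of_injOn Prod.snd (fun p hp ↦ (mem_ratioFiber.1 hp).2.1) ?_
  intro p hp q hq h
  have h' : p.2 = q.2 := h
  exact Prod.ext (by rw [fst_eq_mul_snd_of_mem_ratioFiber hA hp,
    fst_eq_mul_snd_of_mem_ratioFiber hA hq, h']) h'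

lemma ratioFiber_add_ratioFiber_subset :
    ratioFiber A l + ratioFiber A m ⊆ (A + A) ×ˢ (A + A) :=
  product_add_product_comm A A A A ▸ add_subset_add (filter_subset _ _) (filter_subset _ _)

lemma card_ratioFiber_add_ratioFiber (hA : 0 ∉ A) (hlm : l ≠ m) :
    #(ratioFiber A l + ratioFiber A m) = #(ratioFiber A l) * #(ratioFiber A m) := by
  refine card_add_iff.2 ?_
  rintro ⟨p, q⟩ ⟨hp, hq⟩ ⟨p', q'⟩ ⟨hp', hq'⟩ h
  have e1 := fst_eq_mul_snd_of_mem_ratioFiber hA hp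
  have e2 := fst_eq_mul_snd_of_mem_ratioFiber hA hq
  have e3 := fst_eq_mul_snd_of_mem_ratioFiber hA hp'
  have e4 := fst_eq_mul_snd_of_mem_ratioFiber hA hq'
  have h1 : p.1 + q.1 = p'.1 + q'.1 := congrArg Prod.fst h
  have h2 : p.2 + q.2 = p'.2 + q'.2 := congrArg Prod.snd h
  have hq2 : q.2 = q'.2 := by
    have : (m - l) * (q.2 - q'.2) = 0 := by linear_combination h1 - e1 - e2 + e3 + e4 - l * h2
    simpa [sub_eq_zero, hlm.symm] using this
  have hp2 : p.2 = p'.2 := by linear_combination h2 - hq2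
  simp only [Prod.mk.injEq]
  exact ⟨Prod.ext (by rw [e1, e3, hp2]) hp2, Prod.ext (by rw [e2, e4, hq2]) hq2⟩

end Field

lemma zero_notMem_of_forall_pos {α : Type*} [Preorder α] [Zero α] {s : Finset α}
    (hs : ∀ a ∈ s, 0 < a) : 0 ∉ s :=
  fun h ↦ (hs 0 h).false

section LinearOrderedField

variable {𝕜 : Type*} [Field 𝕜] [LinearOrder 𝕜] [IsStrictOrderedRing 𝕜] {A : Finset 𝕜} {l m : 𝕜}

lemma slope_bounds_of_mem_ratioFiber_add (hA : ∀ a ∈ A, 0 < a) (hlm : l < m) {x : 𝕜 × 𝕜}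
    (hx : x ∈ ratioFiber A l + ratioFiber A m) : 0 < x.2 ∧ l * x.2 < x.1 ∧ x.1 < m * x.2 := by
  obtain ⟨p, hp, q, hq, rfl⟩ := mem_add.1 hx
  have h0 := zero_notMem_of_forall_pos hA
  have hp2 := hA _ (mem_ratioFiber.1 hp).2.1
  have hq2 := hA _ (mem_ratioFiber.1 hq).2.1
  simp only [Prod.fst_add, Prod.snd_add, fst_eq_mul_snd_of_mem_ratioFiber h0 hp,
    fst_eq_mul_snd_of_mem_ratioFiber h0 hq]
  refine ⟨by positivity, ?_, ?_⟩ <;> nlinarith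

lemma disjoint_ratioFiber_add_ratioFiber (hA : ∀ a ∈ A, 0 < a) {l' m' : 𝕜} (hlm : l < m)
    (hlm' : l' < m') (hml' : m ≤ l') :
    Disjoint (ratioFiber A l + ratioFiber A m) (ratioFiber A l' + ratioFiber A m') := by
  refine disjoint_left.2 fun x hx hx' ↦ ?_
  obtain ⟨hx2, -, hlt⟩ := slope_bounds_of_mem_ratioFiber_add hA hlm hx
  obtain ⟨-, hlt', -⟩ := slope_bounds_of_mem_ratioFiber_add hA hlm' hx'
  nlinarith

lemma sum_card_ratioFiber_mul_le (hA : ∀ a ∈ A, 0 < a) (T : Finset 𝕜) (next : 𝕜 → 𝕜)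
    (hlt : ∀ l ∈ T, l < next l) (hgap : ∀ l ∈ T, ∀ l' ∈ T, l < l' → next l ≤ l') :
    ∑ l ∈ T, #(ratioFiber A l) * #(ratioFiber A (next l)) ≤ #(A + A) ^ 2 := by
  have hdisj : (T : Set 𝕜).PairwiseDisjoint fun l ↦ ratioFiber A l + ratioFiber A (next l) := by
    intro l hl l' hl' hne
    rcases hne.lt_or_gt with h | h
    · exact disjoint_ratioFiber_add_ratioFiber hA (hlt l hl) (hlt l' hl') (hgap l hl l' hl' h)
    · exact (disjoint_ratioFiber_add_ratioFiber hA (hlt l' hl') (hlt l hl)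
        (hgap l' hl' l hl h)).symm
  calc ∑ l ∈ T, #(ratioFiber A l) * #(ratioFiber A (next l))
      = #(T.biUnion fun l ↦ ratioFiber A l + ratioFiber A (next l)) := by
        rw [card_biUnion hdisj]
        refine sum_congr rfl fun l hl ↦ ?_
        exact (card_ratioFiber_add_ratioFiber (zero_notMem_of_forall_pos hA) (hlt l hl).ne).symm
    _ ≤ #((A + A) ×ˢ (A + A)) :=
        card_le_card (biUnion_subset.2 fun _ _ ↦ ratioFiber_add_ratioFiber_subset)
    _ = #(A + A) ^ 2 := by rw [card_product, sq]

lemma sum_sq_card_ratioFiber_le_of_balanced (hA : ∀ a ∈ A, 0 < a) {S : Finset 𝕜}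
    (hS : ∀ l ∈ S, ∀ m ∈ S, #(ratioFiber A l) ≤ 2 * #(ratioFiber A m)) :
    ∑ l ∈ S, #(ratioFiber A l) ^ 2 ≤ 3 * #(A + A) ^ 2 := by
  rcases S.eq_empty_or_nonempty with rfl | hne
  · simp
  set T := S.erase (S.max' hne)
  have hnext : ∀ l ∈ T, ∃ m ∈ S, l < m ∧ ∀ x ∈ S, l < x → m ≤ x := fun l hl ↦
    have hmax : S.max' hne ∈ {x ∈ S | l < x} :=
      mem_filter.2 ⟨S.max'_mem hne, S.lt_max'_of_mem_erase_max' hne hl⟩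
    let ⟨m, hm, hmin⟩ := exists_min_image _ id ⟨_, hmax⟩
    ⟨m, (mem_filter.1 hm).1, (mem_filter.1 hm).2, fun x hx hlx ↦ hmin x (mem_filter.2 ⟨hx, hlx⟩)⟩
  choose! next hnextS hlt hgap using hnext
  have hsq : ∑ l ∈ T, #(ratioFiber A l) ^ 2
      ≤ 2 * ∑ l ∈ T, #(ratioFiber A l) * #(ratioFiber A (next l)) := by
    rw [mul_sum]
    refine sum_le_sum fun l hl ↦ ?_
    have := hS l (mem_of_mem_erase hl) _ (hnextS l hl)
    nlinarith
  have hmax : #(ratioFiber A (S.max' hne)) ^ 2 ≤ #(A + A) ^ 2 := by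
    gcongr
    exact (card_ratioFiber_le (zero_notMem_of_forall_pos hA)).trans card_le_card_add_self
  have hcons := sum_card_ratioFiber_mul_le hA T next hlt
    fun l hl l' hl' h ↦ hgap l hl l' (mem_of_mem_erase hl') h
  calc ∑ l ∈ S, #(ratioFiber A l) ^ 2
      = ∑ l ∈ T, #(ratioFiber A l) ^ 2 + #(ratioFiber A (S.max' hne)) ^ 2 :=
        (sum_erase_add S _ (S.max'_mem hne)).symm
    _ ≤ 3 * #(A + A) ^ 2 := by omega

end LinearOrderedField

lemma Nat.le_two_mul_of_log_two_pred_eq {a b : ℕ} (hb : 0 < b)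
    (h : Nat.log 2 (a - 1) = Nat.log 2 (b - 1)) : a ≤ 2 * b := by
  have ha : a - 1 < 2 ^ (Nat.log 2 (b - 1) + 1) := h ▸ Nat.lt_pow_succ_log_self one_lt_two _
  rcases Nat.eq_zero_or_pos (b - 1) with hb1 | hb1
  · rw [hb1] at ha
    simp only [Nat.log_zero_right, zero_add, pow_one] at ha
    omega
  · have := Nat.pow_log_le_self 2 hb1.ne'
    rw [pow_succ] at ha
    omega

lemma sum_le_mul_of_sum_le_on_balanced {ι : Type*} {s : Finset ι} {f g : ι → ℕ} {K C : ℕ}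
    (hK : 0 < K) (hf : ∀ i ∈ s, 0 < f i ∧ f i ≤ 2 ^ K)
    (hC : ∀ t ⊆ s, (∀ i ∈ t, ∀ j ∈ t, f i ≤ 2 * f j) → ∑ i ∈ t, g i ≤ C) :
    ∑ i ∈ s, g i ≤ K * C := by
  -- the class of `f i` is `k` iff `2 ^ k < f i ≤ 2 ^ (k + 1)`, with `f i ∈ {1, 2}` for `k = 0`
  have hclass : ∀ i ∈ s, Nat.log 2 (f i - 1) ∈ range K := fun i hi ↦ by
    rcases Nat.eq_zero_or_pos (f i - 1) with h | h
    · simpa [h] using hK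
    · exact mem_range.2 (Nat.log_lt_of_lt_pow h.ne' (by have := (hf i hi).2; omega))
  rw [← sum_fiberwise_of_maps_to hclass]
  calc ∑ k ∈ range K, ∑ i ∈ s with Nat.log 2 (f i - 1) = k, g i
      ≤ ∑ _k ∈ range K, C := sum_le_sum fun k _ ↦ hC _ (filter_subset _ _) fun i hi j hj ↦
        Nat.le_two_mul_of_log_two_pred_eq ((hf j (mem_filter.1 hj).1).1)
          ((mem_filter.1 hi).2.trans (mem_filter.1 hj).2.symm)
    _ = K * C := by rw [sum_const, card_range, smul_eq_mul]

lemma card_pow_four_le {𝕜 : Type*} [Field 𝕜] [LinearOrder 𝕜] [IsStrictOrderedRing 𝕜]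
    {A : Finset 𝕜} (hA : ∀ a ∈ A, 0 < a) {K : ℕ} (hK : 0 < K) (hAK : #A ≤ 2 ^ K) :
    #A ^ 4 ≤ 3 * K * #(A + A) ^ 2 * #(A / A) := by
  have hbal : ∑ l ∈ A / A, #(ratioFiber A l) ^ 2 ≤ K * (3 * #(A + A) ^ 2) :=
    sum_le_mul_of_sum_le_on_balanced hK
      (fun l hl ↦ ⟨card_ratioFiber_pos hl,
        (card_ratioFiber_le (zero_notMem_of_forall_pos hA)).trans hAK⟩)
      fun _ _ ↦ sum_sq_card_ratioFiber_le_of_balanced hA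
  calc #A ^ 4 = (∑ l ∈ A / A, #(ratioFiber A l)) ^ 2 := by rw [sum_card_ratioFiber]; ring
    _ ≤ #(A / A) * ∑ l ∈ A / A, #(ratioFiber A l) ^ 2 := sq_sum_le_card_mul_sum_sq
    _ ≤ #(A / A) * (K * (3 * #(A + A) ^ 2)) := by gcongr
    _ = 3 * K * #(A + A) ^ 2 * #(A / A) := by ring

theorem sum_division_log_estimate (A : Finset ℝ) (hA : ∀ a ∈ A, 0 < a) (hcard : 2 ≤ A.card) :
    ((A + A).card : ℝ) ^ 2 * ((A / A).card : ℝ)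
      ≥ (A.card : ℝ) ^ 4 / (4 * (⌈Real.logb 2 (A.card : ℝ)⌉ : ℝ)) := by
  have hceil : ⌈Real.logb 2 (#A : ℝ)⌉ = Nat.clog 2 #A := by
    exact_mod_cast Real.ceil_logb_natCast (b := 2) (Nat.cast_nonneg #A)
  have hK : 0 < Nat.clog 2 #A := Nat.clog_pos one_lt_two hcard
  have key : (#A : ℝ) ^ 4 ≤ 3 * Nat.clog 2 #A * #(A + A) ^ 2 * #(A / A) := by
    exact_mod_cast card_pow_four_le hA hK (Nat.le_pow_clog one_lt_two _)
  rw [hceil, Int.cast_natCast, ge_iff_le, div_le_iff₀ (by positivity)]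
  have : (0 : ℝ) ≤ Nat.clog 2 #A * #(A + A) ^ 2 * #(A / A) := by positivity
  linarith
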